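/- Let P be a locally finite poset and k a field of characteristic 0. For every f ∈ C^n(P;k) (n ≥ 1), the map Φ is a cochain map: Φ(δf) = δ_H(Φf), where δ is the simplicial coboundary and δ_H is the Hochschild coboundary on multilinear maps (kP)^n → kP. -/

import Mathlib

/-!
Expand `Φ(δf)(a)(x, y)` as a double sum over chains `x = c₀ ≤ ⋯ ≤ c_{n+1} = y` and faces `t`, and
sum each face separately. Deleting `c₀` (resp. `c_{n+1}`) and summing out that vertex gives
`a₁ * Φf(a₂, …)` (resp. `Φf(…, aₙ) * a_{n+1}`). Deleting an interior vertex `c_t` and summing it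
out over the interval between its neighbours turns `a_t(c_{t-1}, c_t) · a_{t+1}(c_t, c_{t+1})` into
the convolution `(a_t * a_{t+1})(c_{t-1}, c_{t+1})`, so that face is the `t`-th inner term of
`δ_H(Φf)`, with the same sign.
-/

open Finset

/-- The Hochschild coboundary:
`(δ_H F)(a_1, …, a_{n+1}) = a_1·F(a_2, …, a_{n+1}) + ∑_{t=1}^n (-1)^t F(a_1, …, a_t·a_{t+1}, …, a_{n+1})
  + (-1)^{n+1} F(a_1, …, a_n)·a_{n+1}`. -/
def hCobound (k : Type*) [Field k] {A : Type*} [Ring A] [Algebra k A]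
    (n : ℕ) (F : (Fin n → A) → A) : (Fin (n + 1) → A) → A :=
  fun a =>
    a 0 * F (fun s => a s.succ)
      + (∑ t : Fin n, (-1 : k) ^ ((t : ℕ) + 1) •
          F fun s =>
            if (s : ℕ) < (t : ℕ) then a s.castSucc
            else if s = t then a t.castSucc * a t.succ
            else a s.succ)
      + (-1 : k) ^ (n + 1) • (F (fun s => a s.castSucc) * a (Fin.last n))

section Incidence
variable (k : Type*) [Field k] (P : Type*) [PartialOrder P] [LocallyFiniteOrder P]
  [DecidableEq P]

/-- A chain (simplex) of length `n` in the poset `P`: a monotone `(n+1)`-tuple. -/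
abbrev SChain (n : ℕ) := {c : Fin (n + 1) → P // Monotone c}

open scoped Classical in
/-- The finset of monotone `(n+1)`-tuples from `x` to `y`. -/
noncomputable def chainTuples (n : ℕ) (x y : P) : Finset (Fin (n + 1) → P) :=
  (Fintype.piFinset fun _ => Finset.Icc x y).filter fun c =>
    Monotone c ∧ c 0 = x ∧ c (Fin.last n) = y

lemma chainTuples_mono {n : ℕ} {x y : P} {c : Fin (n + 1) → P}
    (hc : c ∈ chainTuples P n x y) : Monotone c := by
  classical
  simp only [chainTuples, Finset.mem_filter] at hc
  exact hc.2.1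

lemma le_of_mem_chainTuples {n : ℕ} {x y : P} {c : Fin (n + 1) → P}
    (hc : c ∈ chainTuples P n x y) : x ≤ y := by
  classical
  simp only [chainTuples, Finset.mem_filter] at hc
  exact hc.2.2.1 ▸ hc.2.2.2 ▸ hc.2.1 (Fin.zero_le _)

/-- The map `Φ` from simplicial `n`-cochains on `P` to Hochschild `n`-cochains of `kP`:
`(Φf)(a_1, …, a_n)(x, y) = ∑_{x = i₀ ≤ ⋯ ≤ iₙ = y} f(i₀, …, iₙ)·a_1(i₀,i₁)⋯aₙ(i_{n-1},iₙ)`. -/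
noncomputable def Phi (n : ℕ) (f : SChain P n → k) (a : Fin n → IncidenceAlgebra k P) :
    IncidenceAlgebra k P :=
  ⟨fun x y => ∑ c ∈ (chainTuples P n x y).attach,
      f ⟨c.1, chainTuples_mono P c.2⟩ * ∏ t : Fin n, a t (c.1 t.castSucc) (c.1 t.succ),
   fun x y hxy => by
    try dsimp only
    exact Finset.sum_eq_zero fun c _ => absurd (le_of_mem_chainTuples P c.2) hxy⟩

end Incidence

/-- The simplicial coboundary:
`(δf)(i_0, …, i_{n+1}) = ∑_{t=0}^{n+1} (-1)^t f(i_0, …, î_t, …, i_{n+1})`. -/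
def sCobound (k : Type*) [Field k] (P : Type*) [PartialOrder P]
    (n : ℕ) (f : SChain P n → k) : SChain P (n + 1) → k :=
  fun c => ∑ t : Fin (n + 2),
    (-1 : k) ^ (t : ℕ) *
      f ⟨fun s => c.1 (t.succAbove s), c.2.comp (Fin.strictMono_succAbove t).monotone⟩

namespace Fin

theorem insertNth_succ_apply_castSucc_of_le {n : ℕ} {α : Type*} {p i : Fin (n + 1)} (h : i ≤ p)
    (u : α) (d : Fin (n + 1) → α) :
    insertNth (α := fun _ => α) p.succ u d i.castSucc = d i := by
  rw [← succAbove_succ_of_le p i h, insertNth_apply_succAbove]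

theorem insertNth_succ_apply_succ_of_lt {n : ℕ} {α : Type*} {p i : Fin (n + 1)} (h : p < i)
    (u : α) (d : Fin (n + 1) → α) :
    insertNth (α := fun _ => α) p.succ u d i.succ = d i := by
  rw [← succAbove_succ_of_lt p i h, insertNth_apply_succAbove]

end Fin

theorem IncidenceAlgebra.sum_apply {k P ι : Type*} [AddCommMonoid k] [LE P] (s : Finset ι)
    (F : ι → IncidenceAlgebra k P) (x y : P) : (∑ i ∈ s, F i) x y = ∑ i ∈ s, F i x y :=
  map_sum ({ toFun := fun F => F x y, map_zero' := rfl, map_add' := fun _ _ => rfl } :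
    IncidenceAlgebra k P →+ k) F s

section Chains

variable {P : Type*} [PartialOrder P] [LocallyFiniteOrder P] [DecidableEq P] {n : ℕ} {x y : P}
  {c : Fin (n + 1) → P}

theorem mem_chainTuples : c ∈ chainTuples P n x y ↔ Monotone c ∧ c 0 = x ∧ c (Fin.last n) = y := by
  classical
  refine ⟨fun hc => (mem_filter.1 hc).2, fun ⟨hc, h0, hl⟩ => mem_filter.2 ⟨?_, hc, h0, hl⟩⟩
  exact Fintype.mem_piFinset.2 fun i => mem_Icc.2 ⟨h0 ▸ hc (Fin.zero_le i), hl ▸ hc (Fin.le_last i)⟩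

theorem mem_Icc_of_mem_chainTuples (hc : c ∈ chainTuples P n x y) (i : Fin (n + 1)) :
    c i ∈ Icc x y := by
  obtain ⟨hm, rfl, rfl⟩ := mem_chainTuples.1 hc
  exact mem_Icc.2 ⟨hm (Fin.zero_le i), hm (Fin.le_last i)⟩

end Chains

section Weights

variable {k P : Type*} [Preorder P]

def chainWeight [CommSemiring k] {n : ℕ} (a : Fin n → IncidenceAlgebra k P)
    (c : Fin (n + 1) → P) : k :=
  ∏ t : Fin n, a t (c t.castSucc) (c t.succ)

def mulAdjacent {A : Type*} [Mul A] {n : ℕ} (a : Fin (n + 1) → A) (j : Fin n) : Fin n → A :=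
  fun s => if (s : ℕ) < (j : ℕ) then a s.castSucc else if s = j then a j.castSucc * a j.succ
    else a s.succ

theorem mulAdjacent_of_ne {A : Type*} [Mul A] {n : ℕ} (a : Fin (n + 1) → A) {j s : Fin n}
    (h : s ≠ j) : mulAdjacent a j s = a (j.castSucc.succAbove s) := by
  rcases lt_or_gt_of_ne h with h | h
  · rw [mulAdjacent, if_pos (Fin.lt_def.1 h), Fin.succAbove_castSucc_of_lt _ _ h]
  · rw [mulAdjacent, if_neg (not_lt.2 (Fin.le_def.1 h.le)), if_neg h.ne',
      Fin.succAbove_castSucc_of_le _ _ h.le]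

variable [CommSemiring k] {n : ℕ}

theorem chainWeight_eq_mul_removeNth_zero (a : Fin (n + 1) → IncidenceAlgebra k P)
    (c : Fin (n + 2) → P) :
    chainWeight a c = a 0 (c 0) (c 1) * chainWeight (fun s => a s.succ) (Fin.removeNth 0 c) := by
  simp [chainWeight, Fin.prod_univ_succ, Fin.removeNth]

theorem chainWeight_eq_removeNth_last_mul (a : Fin (n + 1) → IncidenceAlgebra k P)
    (c : Fin (n + 2) → P) :
    chainWeight a c = chainWeight (fun s => a s.castSucc) (Fin.removeNth (Fin.last _) c) *
      a (Fin.last n) (c (Fin.last n).castSucc) (c (Fin.last _)) := by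
  simp [chainWeight, Fin.prod_univ_castSucc, Fin.removeNth]

theorem chainWeight_mulAdjacent [LocallyFiniteOrder P] (a : Fin (n + 1) → IncidenceAlgebra k P)
    (j : Fin n) (d : Fin (n + 1) → P) :
    chainWeight (mulAdjacent a j) d = ∑ u ∈ Icc (d j.castSucc) (d j.succ),
      chainWeight a (Fin.insertNth j.castSucc.succ u d) := by
  have hrest : ∀ u, ∀ s ∈ univ.erase j, mulAdjacent a j s (d s.castSucc) (d s.succ) =
      a (j.castSucc.succAbove s)
        (Fin.insertNth (α := fun _ => P) j.castSucc.succ u d (j.castSucc.succAbove s).castSucc)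
        (Fin.insertNth (α := fun _ => P) j.castSucc.succ u d (j.castSucc.succAbove s).succ) := by
    intro u s hs
    rw [mulAdjacent_of_ne a (ne_of_mem_erase hs)]
    rcases lt_or_gt_of_ne (ne_of_mem_erase hs) with h | h
    · rw [Fin.succAbove_castSucc_of_lt _ _ h, Fin.succ_castSucc s,
        Fin.insertNth_succ_apply_castSucc_of_le (Fin.castSucc_le_castSucc_iff.2 h.le),
        Fin.insertNth_succ_apply_castSucc_of_le (Fin.succ_le_castSucc_iff.2 h)]
    · rw [Fin.succAbove_castSucc_of_le _ _ h.le, ← Fin.succ_castSucc s,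
        Fin.insertNth_succ_apply_succ_of_lt (Fin.castSucc_lt_castSucc_iff.2 h),
        Fin.insertNth_succ_apply_succ_of_lt (Fin.castSucc_lt_succ_iff.2 h.le)]
  have hj : mulAdjacent a j j = a j.castSucc * a j.succ := by simp [mulAdjacent]
  simp only [chainWeight]
  rw [← mul_prod_erase _ _ (mem_univ j), hj, IncidenceAlgebra.mul_apply, sum_mul]
  refine sum_congr rfl fun u _ => ?_
  rw [Fin.prod_univ_succAbove _ j.castSucc, ← mul_prod_erase _ _ (mem_univ j),
    prod_congr rfl (hrest u), Fin.succAbove_castSucc_self, ← Fin.succ_castSucc j,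
    Fin.insertNth_apply_same, Fin.insertNth_succ_apply_castSucc_of_le le_rfl,
    Fin.insertNth_succ_apply_succ_of_lt Fin.castSucc_lt_succ, mul_assoc]

end Weights

section Cochains

variable {k P : Type*} [PartialOrder P] {n : ℕ}

open Classical in
noncomputable def extendCochain [Zero k] (f : SChain P n → k) (c : Fin (n + 1) → P) : k :=
  if h : Monotone c then f ⟨c, h⟩ else 0

theorem extendCochain_of_monotone [Zero k] (f : SChain P n → k) {c : Fin (n + 1) → P}
    (hc : Monotone c) : extendCochain f c = f ⟨c, hc⟩ := by
  rw [extendCochain, dif_pos hc]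

variable [Field k]

theorem extendCochain_sCobound (f : SChain P n → k) {c : Fin (n + 2) → P} (hc : Monotone c) :
    extendCochain (sCobound k P n f) c =
      ∑ t : Fin (n + 2), (-1) ^ (t : ℕ) * extendCochain f (Fin.removeNth t c) := by
  rw [extendCochain_of_monotone _ hc]
  exact sum_congr rfl fun t _ => by
    rw [extendCochain_of_monotone f (c := Fin.removeNth t c)
      (hc.comp (Fin.strictMono_succAbove t).monotone)]
    rfl

variable [LocallyFiniteOrder P] [DecidableEq P]

theorem Phi_apply (f : SChain P n → k) (a : Fin n → IncidenceAlgebra k P) (x y : P) :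
    Phi k P n f a x y = ∑ c ∈ chainTuples P n x y, extendCochain f c * chainWeight a c := by
  rw [← sum_attach]
  exact sum_congr rfl fun c _ => by rw [extendCochain_of_monotone f (chainTuples_mono P c.2)]; rfl

theorem sum_chainTuples_removeNth_zero (f : SChain P n → k)
    (a : Fin (n + 1) → IncidenceAlgebra k P) (x y : P) :
    ∑ c ∈ chainTuples P (n + 1) x y, extendCochain f (Fin.removeNth 0 c) * chainWeight a c =
      (a 0 * Phi k P n f fun s => a s.succ) x y := by
  simp only [IncidenceAlgebra.mul_apply, Phi_apply, mul_sum]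
  rw [sum_sigma']
  refine sum_nbij' (fun c => ⟨c 1, Fin.removeNth 0 c⟩) (fun p => Fin.insertNth 0 x p.2)
    ?_ ?_ ?_ ?_ ?_
  · intro c hc
    obtain ⟨hm, -, hl⟩ := mem_chainTuples.1 hc
    refine mem_sigma.2 ⟨mem_Icc_of_mem_chainTuples hc 1, mem_chainTuples.2 ⟨?_, rfl, ?_⟩⟩
    · exact hm.comp (Fin.strictMono_succAbove 0).monotone
    · simpa [Fin.removeNth] using hl
  · rintro ⟨z, d⟩ hp
    simp only [mem_sigma, mem_chainTuples] at hp
    obtain ⟨hz, hm, rfl, rfl⟩ := hp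
    refine mem_chainTuples.2 ⟨Fin.insertNth_zero_monotone hm x (mem_Icc.1 hz).1, ?_, ?_⟩
    · simp
    · simp [Fin.insertNth_zero']
  · intro c hc
    rw [← (mem_chainTuples.1 hc).2.1]
    exact Fin.insertNth_self_removeNth 0 c
  · rintro ⟨z, d⟩ hp
    simp only [mem_sigma, mem_chainTuples] at hp
    obtain ⟨-, -, rfl, -⟩ := hp
    simp [Fin.insertNth_zero']
  · intro c hc
    rw [chainWeight_eq_mul_removeNth_zero, (mem_chainTuples.1 hc).2.1]
    ring

theorem sum_chainTuples_removeNth_last (f : SChain P n → k)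
    (a : Fin (n + 1) → IncidenceAlgebra k P) (x y : P) :
    ∑ c ∈ chainTuples P (n + 1) x y,
        extendCochain f (Fin.removeNth (Fin.last _) c) * chainWeight a c =
      (Phi k P n f (fun s => a s.castSucc) * a (Fin.last n)) x y := by
  simp only [IncidenceAlgebra.mul_apply, Phi_apply, sum_mul]
  rw [sum_sigma']
  refine sum_nbij' (fun c => ⟨c (Fin.last n).castSucc, Fin.removeNth (Fin.last _) c⟩)
    (fun p => Fin.insertNth (Fin.last _) y p.2) ?_ ?_ ?_ ?_ ?_
  · intro c hc
    obtain ⟨hm, h0, -⟩ := mem_chainTuples.1 hc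
    refine mem_sigma.2 ⟨mem_Icc_of_mem_chainTuples hc _, mem_chainTuples.2 ⟨?_, ?_, ?_⟩⟩
    · exact hm.comp (Fin.strictMono_succAbove _).monotone
    · simpa [Fin.removeNth] using h0
    · simp [Fin.removeNth]
  · rintro ⟨z, d⟩ hp
    simp only [mem_sigma, mem_chainTuples] at hp
    obtain ⟨hz, hm, rfl, rfl⟩ := hp
    refine mem_chainTuples.2 ⟨Fin.insertNth_last_monotone hm y (mem_Icc.1 hz).2, ?_, ?_⟩
    · simp [Fin.insertNth_last']
    · simp
  · intro c hc
    rw [← (mem_chainTuples.1 hc).2.2]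
    exact Fin.insertNth_self_removeNth _ c
  · rintro ⟨z, d⟩ hp
    simp only [mem_sigma, mem_chainTuples] at hp
    obtain ⟨-, -, -, rfl⟩ := hp
    simp [Fin.insertNth_last']
  · intro c hc
    rw [chainWeight_eq_removeNth_last_mul, (mem_chainTuples.1 hc).2.2]
    ring

theorem sum_chainTuples_removeNth_castSucc_succ (f : SChain P n → k)
    (a : Fin (n + 1) → IncidenceAlgebra k P) (j : Fin n) (x y : P) :
    ∑ c ∈ chainTuples P (n + 1) x y,
        extendCochain f (Fin.removeNth j.castSucc.succ c) * chainWeight a c =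
      Phi k P n f (mulAdjacent a j) x y := by
  simp only [Phi_apply, chainWeight_mulAdjacent, mul_sum]
  rw [sum_sigma']
  have hT0 : j.castSucc.succ ≠ 0 := Fin.succ_ne_zero _
  have hTl : j.castSucc.succ ≠ Fin.last _ := by simp [Fin.ext_iff]; omega
  refine sum_nbij' (fun c => ⟨Fin.removeNth j.castSucc.succ c, c j.castSucc.succ⟩)
    (fun p => Fin.insertNth j.castSucc.succ p.2 p.1) ?_ ?_ ?_ ?_ ?_
  · intro c hc
    obtain ⟨hm, rfl, rfl⟩ := mem_chainTuples.1 hc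
    refine mem_sigma.2 ⟨mem_chainTuples.2 ⟨hm.comp (Fin.strictMono_succAbove _).monotone, ?_, ?_⟩,
      mem_Icc.2 ⟨hm ?_, hm ?_⟩⟩
    · simp [Fin.removeNth, Fin.succAbove_ne_zero_zero hT0]
    · simp [Fin.removeNth, Fin.succAbove_ne_last_last hTl]
    · simp [Fin.le_def]
    · simp [Fin.le_def]
  · rintro ⟨d, u⟩ hp
    simp only [mem_sigma, mem_chainTuples, mem_Icc] at hp
    obtain ⟨⟨hm, rfl, rfl⟩, hu⟩ := hp
    refine mem_chainTuples.2 ⟨Fin.insertNth_monotone hm j u hu.1 hu.2, ?_, ?_⟩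
    · simpa using Fin.insertNth_succ_apply_castSucc_of_le (Fin.zero_le j.castSucc) u d
    · simpa using Fin.insertNth_succ_apply_succ_of_lt (Fin.castSucc_lt_last j) u d
  · intro c _
    exact Fin.insertNth_self_removeNth _ c
  · rintro ⟨d, u⟩ _
    simp
  · intro c _
    simp only [Fin.insertNth_self_removeNth]

end Cochains

theorem phi_is_cochain_map_general
    (k : Type*) [Field k]
    (P : Type*) [PartialOrder P] [LocallyFiniteOrder P] [DecidableEq P]
    (n : ℕ) (f : SChain P n → k) :
    Phi k P (n + 1) (sCobound k P n f) = hCobound k n (Phi k P n f) := by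
  funext a
  refine IncidenceAlgebra.ext fun x y _ => ?_
  have hfaces : Phi k P (n + 1) (sCobound k P n f) a x y = ∑ t : Fin (n + 2), (-1) ^ (t : ℕ) *
      ∑ c ∈ chainTuples P (n + 1) x y, extendCochain f (Fin.removeNth t c) * chainWeight a c := by
    simp only [Phi_apply, mul_sum]
    rw [sum_comm]
    refine sum_congr rfl fun c hc => ?_
    rw [extendCochain_sCobound f (chainTuples_mono P hc), sum_mul]
    simp only [mul_assoc]
  rw [hfaces, Fin.sum_univ_succ, Fin.sum_univ_castSucc, sum_chainTuples_removeNth_zero,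
    Fin.succ_last, sum_chainTuples_removeNth_last]
  simp only [sum_chainTuples_removeNth_castSucc_succ, hCobound, IncidenceAlgebra.add_apply,
    IncidenceAlgebra.sum_apply, IncidenceAlgebra.constSMul_apply, smul_eq_mul, Fin.val_zero,
    pow_zero, one_mul, Fin.val_succ, Fin.val_castSucc, Fin.val_last]
  exact (add_assoc _ _ _).symm

theorem phi_is_cochain_map
    (k : Type*) [Field k] [CharZero k]
    (P : Type*) [PartialOrder P] [LocallyFiniteOrder P] [DecidableEq P]
    (n : ℕ) (hn : 1 ≤ n) (f : SChain P n → k) :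
    Phi k P (n + 1) (sCobound k P n f) = hCobound k n (Phi k P n f) :=
  phi_is_cochain_map_general k P n f
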